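/- For a quaternion q, if both q·i·conj(q) and conj(q)·i·q are complex numbers, then either q is a complex number or q = q*·j for some complex number q*. -/

import Mathlib

/-!
Write `q = z + w j` with `z, w` complex. Since `j` anticommutes with `i` and `j w̄ = w j`, one has
`star q = z̄ - w j` and `q i (star q) = i (z - w j)(z̄ - w j) = i (|z|² - |w|²) - 2 i z w j`.
So `q i (star q)` is complex exactly when `z w = 0`, i.e. when `w = 0` (q is complex) or `z = 0`
(q = w j).
-/

local notation "ℍ" => Quaternion ℝ

def IsComplexQ (q : ℍ) : Prop := q.imJ = 0 ∧ q.imK = 0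

def qi : ℍ := ⟨0, 1, 0, 0⟩
def qj : ℍ := ⟨0, 0, 1, 0⟩

def zPart (q : ℍ) : ℂ := ⟨q.re, q.imI⟩

def wPart (q : ℍ) : ℂ := ⟨q.imJ, q.imK⟩

theorem isComplexQ_iff_wPart_eq_zero {q : ℍ} : IsComplexQ q ↔ wPart q = 0 := by
  simp [IsComplexQ, wPart, Complex.ext_iff]

theorem isComplexQ_coeComplex (z : ℂ) : IsComplexQ z :=
  ⟨Quaternion.imJ_coeComplex z, Quaternion.imK_coeComplex z⟩

theorem eq_zPart_add_wPart_mul_qj (q : ℍ) : q = zPart q + wPart q * qj := by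
  ext <;>
    simp only [Quaternion.re_add, Quaternion.imI_add, Quaternion.imJ_add, Quaternion.imK_add,
      Quaternion.re_mul, Quaternion.imI_mul, Quaternion.imJ_mul, Quaternion.imK_mul] <;>
    simp [zPart, wPart, qj]

theorem wPart_mul_qi_mul_star (q : ℍ) :
    wPart (q * qi * star q) = -2 * Complex.I * (zPart q * wPart q) := by
  apply Complex.ext <;>
    simp only [wPart, zPart, Quaternion.re_mul, Quaternion.imI_mul, Quaternion.imJ_mul,
      Quaternion.imK_mul, Quaternion.re_star, Quaternion.imI_star, Quaternion.imJ_star,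
      Quaternion.imK_star] <;>
    simp [qi] <;>
    ring

theorem stmt1_general (q : ℍ)
    (h1 : IsComplexQ (q * qi * star q)) :
    IsComplexQ q ∨ ∃ qs : ℍ, IsComplexQ qs ∧ q = qs * qj := by
  have hzw : zPart q * wPart q = 0 := by
    simpa [isComplexQ_iff_wPart_eq_zero, wPart_mul_qi_mul_star] using h1
  rcases mul_eq_zero.mp hzw with hz | hw
  · refine Or.inr ⟨wPart q, isComplexQ_coeComplex _, ?_⟩
    simpa [hz] using eq_zPart_add_wPart_mul_qj q
  · exact Or.inl (isComplexQ_iff_wPart_eq_zero.mpr hw)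

theorem stmt1 (q : ℍ)
    (h1 : IsComplexQ (q * qi * star q)) (h2 : IsComplexQ (star q * qi * q)) :
    IsComplexQ q ∨ ∃ qs : ℍ, IsComplexQ qs ∧ q = qs * qj :=
  stmt1_general q h1
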